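/- arXiv:2604.05398 — 2 statements merged into one kernel-verified Lean document; each statement's English description precedes it below -/
import Mathlib

section
/- Consider the time-inhomogeneous linear–quadratic problem with continuous coefficients B : [0,∞) → ℝ^{d×m}, Σ : [0,∞) → ℝ^{d×d}, α_i : [0,∞) → ℝ and λ_i : [0,∞) → [0,∞) for i = 1,…,d, with R(t) an m × m symmetric positive definite matrix and Q(t) a d × d symmetric matrix for each t, discount rate β > 0, entropy weight γ > 0, running reward f(t, x, u) = −(uᵀR(t)u + xᵀQ(t)x), and generator (𝓛^u φ)(t, x) = (B(t)u)·∇_x φ(t, x) + (1/2) Tr(Σ(t)Σ(t)ᵀ ∇²_x φ(t, x)) + Σ_{i=1}^d λ_i(t)[φ(t, x + α_i(t)e_i) − φ(t, x) − α_i(t) ∂_{x_i} φ(t, x)]. Suppose H : [0,∞) → ℝ^{d×d} is differentiable with H(t) symmetric and H'(t) = β H(t) + Q(t) − H(t)B(t)R(t)⁻¹B(t)ᵀH(t), and g : [0,∞) → ℝ is differentiable with g'(t) = β g(t) − Tr(Σ(t)Σ(t)ᵀH(t)) − Σ_{i=1}^d λ_i(t) α_i(t)² H_{ii}(t) − c_γ(t),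 where c_γ(t) := (γ/2)(m log(πγ) − log det R(t)). Then V(t, x) := xᵀH(t)x + g(t) satisfies, for every t ≥ 0 and x ∈ ℝ^d, that the function u ↦ exp(((𝓛^u V)(t,x) + f(t,x,u))/γ) is integrable on ℝ^m and 0 = ∂_t V(t, x) + γ log ∫_{ℝ^m} exp( ((𝓛^u V)(t, x) + f(t, x, u))/γ ) du − β V(t, x). -/
/-!
For quadratic `V = xᵀHx + g` the generator is affine in the control: the gradient is `(H + Hᵀ)x`,
the Hessian `H + Hᵀ`, and the `i`-th jump contributes exactly `αᵢ² Hᵢᵢ`. The Gibbs integrand is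
therefore the exponential of a concave quadratic in `u`. Completing the square around
`R⁻¹BᵀHx` and writing `R = PᵀP` turns it into a standard Gaussian, so that
`γ log ∫ = (BᵀHx)ᵀR⁻¹(BᵀHx) + tr(ΣΣᵀH) + Σ λᵢαᵢ²Hᵢᵢ − xᵀQx + c_γ`. The Riccati equation for `H`
and the equation for `g` are precisely the cancellation of these terms against `∂ₜV − βV`.
-/

open Matrix MeasureTheory

/-- Gradient of a function on `ℝ^d` (coordinatewise, via the Fréchet derivative). -/
noncomputable def gradientVec {d : ℕ} (φ : (Fin d → ℝ) → ℝ) (x : Fin d → ℝ) : Fin d → ℝ :=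
  fun i => fderiv ℝ φ x (Pi.single i 1)

/-- Hessian matrix of a function on `ℝ^d`. -/
noncomputable def hessianMat {d : ℕ} (φ : (Fin d → ℝ) → ℝ) (x : Fin d → ℝ) :
    Matrix (Fin d) (Fin d) ℝ :=
  fun i j => fderiv ℝ (fun y => fderiv ℝ φ y (Pi.single i 1)) x (Pi.single j 1)

/-- The controlled generator of the linear–quadratic jump-diffusion. -/
noncomputable def lqGen {d m : ℕ} (B : Matrix (Fin d) (Fin m) ℝ)
    (S : Matrix (Fin d) (Fin d) ℝ) (α lam : Fin d → ℝ)
    (u : Fin m → ℝ) (φ : (Fin d → ℝ) → ℝ) (x : Fin d → ℝ) : ℝ :=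
  B.mulVec u ⬝ᵥ gradientVec φ x
    + (1 / 2) * Matrix.trace (S * Sᵀ * hessianMat φ x)
    + ∑ i, lam i *
        (φ (x + α i • (Pi.single i 1 : Fin d → ℝ)) - φ x - α i * gradientVec φ x i)


section QuadraticForm

variable {ι ι' : Type*} [Fintype ι] [Fintype ι']

theorem dotProduct_mulVec_comm (H : Matrix ι ι ℝ) (x v : ι → ℝ) :
    x ⬝ᵥ H *ᵥ v = v ⬝ᵥ Hᵀ *ᵥ x := by
  rw [dotProduct_mulVec, ← mulVec_transpose, dotProduct_comm]

theorem quadForm_add (H : Matrix ι ι ℝ) (x v : ι → ℝ) :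
    (x + v) ⬝ᵥ H *ᵥ (x + v) = x ⬝ᵥ H *ᵥ x + v ⬝ᵥ (H + Hᵀ) *ᵥ x + v ⬝ᵥ H *ᵥ v := by
  rw [mulVec_add, add_dotProduct, dotProduct_add, dotProduct_add, add_mulVec, dotProduct_add,
    dotProduct_mulVec_comm H x v]
  ring

theorem quadForm_transpose_mul_mul (P : Matrix ι' ι ℝ) (K : Matrix ι' ι' ℝ) (x : ι → ℝ) :
    x ⬝ᵥ (Pᵀ * K * P) *ᵥ x = (P *ᵥ x) ⬝ᵥ K *ᵥ (P *ᵥ x) := by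
  rw [← mulVec_mulVec, ← mulVec_mulVec, dotProduct_mulVec, vecMul_transpose]

theorem quadForm_eq_sum (H : Matrix ι ι ℝ) (x : ι → ℝ) :
    x ⬝ᵥ H *ᵥ x = ∑ i, ∑ j, H i j * (x i * x j) := by
  simp only [dotProduct, mulVec, Finset.mul_sum]
  exact Finset.sum_congr rfl fun i _ => Finset.sum_congr rfl fun j _ => by ring

theorem hasDerivAt_quadForm {H : ℝ → Matrix ι ι ℝ} {H' : Matrix ι ι ℝ} {t : ℝ}
    (hH : ∀ i j, HasDerivAt (fun s => H s i j) (H' i j) t) (x : ι → ℝ) :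
    HasDerivAt (fun s => x ⬝ᵥ H s *ᵥ x) (x ⬝ᵥ H' *ᵥ x) t := by
  simp only [quadForm_eq_sum]
  exact HasDerivAt.fun_sum fun i _ => HasDerivAt.fun_sum fun j _ => (hH i j).mul_const _

theorem fderiv_mulVec_apply (M : Matrix ι ι ℝ) (i : ι) (x v : ι → ℝ) :
    fderiv ℝ (fun y => (M *ᵥ y) i) x v = (M *ᵥ v) i := by
  let L := (ContinuousLinearMap.proj i).comp (LinearMap.toContinuousLinearMap M.mulVecLin)
  exact congrArg (· v) L.fderiv

theorem fderiv_quadForm_apply (H : Matrix ι ι ℝ) (c : ℝ) (x v : ι → ℝ) :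
    fderiv ℝ (fun y => y ⬝ᵥ H *ᵥ y + c) x v = v ⬝ᵥ (H + Hᵀ) *ᵥ x := by
  let L := LinearMap.toContinuousLinearMap H.mulVecLin
  have hL : ∀ i, HasFDerivAt (fun y : ι → ℝ => (H *ᵥ y) i)
      ((ContinuousLinearMap.proj i).comp L) x :=
    fun i => ((ContinuousLinearMap.proj i).comp L).hasFDerivAt
  have h : HasFDerivAt (fun y => y ⬝ᵥ H *ᵥ y + c) _ x :=
    (HasFDerivAt.fun_sum fun i (_ : i ∈ Finset.univ) =>
      (hasFDerivAt_apply i x).fun_mul (hL i)).add_const c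
  rw [h.fderiv]
  simp only [_root_.sum_apply, _root_.add_apply, _root_.smul_apply,
    ContinuousLinearMap.comp_apply, LinearMap.coe_toContinuousLinearMap', mulVecLin_apply,
    ContinuousLinearMap.proj_apply, smul_eq_mul, L, Finset.sum_add_distrib]
  change x ⬝ᵥ H *ᵥ v + (H *ᵥ x) ⬝ᵥ v = _
  rw [add_mulVec, dotProduct_add, dotProduct_mulVec_comm H x v, dotProduct_comm (H *ᵥ x),
    add_comm]

end QuadraticForm

section Generator

variable {d m : ℕ}

theorem gradientVec_quadForm (H : Matrix (Fin d) (Fin d) ℝ) (c : ℝ) :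
    gradientVec (fun y => y ⬝ᵥ H *ᵥ y + c) = fun x => (H + Hᵀ) *ᵥ x := by
  ext x i
  rw [gradientVec, fderiv_quadForm_apply, single_one_dotProduct]

theorem hessianMat_quadForm (H : Matrix (Fin d) (Fin d) ℝ) (c : ℝ) (x : Fin d → ℝ) :
    hessianMat (fun y => y ⬝ᵥ H *ᵥ y + c) x = H + Hᵀ := by
  ext i j
  change fderiv ℝ (fun y => gradientVec (fun y => y ⬝ᵥ H *ᵥ y + c) y i) x (Pi.single j 1) = _
  rw [gradientVec_quadForm, fderiv_mulVec_apply, mulVec_single_one]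
  rfl

theorem lqGen_quadForm (B : Matrix (Fin d) (Fin m) ℝ) (S : Matrix (Fin d) (Fin d) ℝ)
    (α lam : Fin d → ℝ) {H : Matrix (Fin d) (Fin d) ℝ} (hH : H.IsSymm) (c : ℝ)
    (u : Fin m → ℝ) (x : Fin d → ℝ) :
    lqGen B S α lam u (fun y => y ⬝ᵥ H *ᵥ y + c) x
      = 2 * (u ⬝ᵥ Bᵀ *ᵥ H *ᵥ x) + trace (S * Sᵀ * H) + ∑ i, lam i * α i ^ 2 * H i i := by
  have hsum : H + Hᵀ = (2 : ℝ) • H := by rw [hH.eq, two_smul]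
  have hjump : ∀ i, (x + α i • Pi.single i 1) ⬝ᵥ H *ᵥ (x + α i • Pi.single i 1) + c
      - (x ⬝ᵥ H *ᵥ x + c) - α i * ((H + Hᵀ) *ᵥ x) i = α i ^ 2 * H i i := by
    intro i
    rw [quadForm_add]
    simp only [smul_dotProduct, single_dotProduct, mulVec_smul, mulVec_single,
      MulOpposite.op_one, one_smul, dotProduct_smul, col_apply, smul_eq_mul, one_mul]
    ring
  rw [lqGen, gradientVec_quadForm, hessianMat_quadForm]
  simp only [hjump]
  rw [hsum]
  simp only [one_div, Algebra.mul_smul_comm, trace_smul, smul_eq_mul, smul_mulVec, dotProduct_smul]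
  rw [dotProduct_mulVec u, vecMul_transpose]
  simp only [mul_assoc]
  ring

end Generator

section ChangeOfVariables

variable {ι E : Type*} [Fintype ι] [DecidableEq ι] [NormedAddCommGroup E]

theorem measurableEmbedding_mulVec {A : Matrix ι ι ℝ} (hA : A.det ≠ 0) :
    MeasurableEmbedding (A *ᵥ ·) :=
  let e := A.toLinearEquiv' (invertibleOfIsUnitDet A hA.isUnit)
  e.toContinuousLinearEquiv.toHomeomorph.measurableEmbedding

theorem integrable_comp_mulVec_iff {A : Matrix ι ι ℝ} (hA : A.det ≠ 0) {f : (ι → ℝ) → E} :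
    Integrable (fun v => f (A *ᵥ v)) ↔ Integrable f := by
  rw [← Function.comp_def, ← (measurableEmbedding_mulVec hA).integrable_map_iff]
  change Integrable f (Measure.map (toLin' A) volume) ↔ _
  rw [Real.map_matrix_volume_pi_eq_smul_volume_pi hA]
  exact integrable_smul_measure (by simpa using hA) ENNReal.ofReal_ne_top

theorem integral_comp_mulVec [NormedSpace ℝ E] {A : Matrix ι ι ℝ} (hA : A.det ≠ 0)
    (f : (ι → ℝ) → E) : ∫ v, f (A *ᵥ v) = |A.det|⁻¹ • ∫ w, f w := by
  rw [← (measurableEmbedding_mulVec hA).integral_map]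
  change ∫ w, f w ∂(Measure.map (toLin' A) volume) = _
  rw [Real.map_matrix_volume_pi_eq_smul_volume_pi hA, integral_smul_measure,
    ENNReal.toReal_ofReal (abs_nonneg _), abs_inv]

end ChangeOfVariables

section Gaussian

open Real

variable {ι : Type*} [Fintype ι]

theorem exp_neg_dotProduct_self_div (γ : ℝ) (w : ι → ℝ) :
    exp (-(w ⬝ᵥ w) / γ) = ∏ i, exp (-γ⁻¹ * w i ^ 2) := by
  rw [← exp_sum, dotProduct, neg_div, Finset.sum_div, ← Finset.sum_neg_distrib]
  exact congrArg exp (Finset.sum_congr rfl fun i _ => by ring)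

theorem integrable_exp_neg_dotProduct_self_div {γ : ℝ} (hγ : 0 < γ) :
    Integrable (fun w : ι → ℝ => exp (-(w ⬝ᵥ w) / γ)) := by
  simp only [exp_neg_dotProduct_self_div]
  exact Integrable.fintype_prod (f := fun _ x => exp (-γ⁻¹ * x ^ 2))
    fun _ => integrable_exp_neg_mul_sq (inv_pos.mpr hγ)

theorem integral_exp_neg_dotProduct_self_div (γ : ℝ) :
    ∫ w : ι → ℝ, exp (-(w ⬝ᵥ w) / γ) = √(π * γ) ^ Fintype.card ι := by
  simp only [exp_neg_dotProduct_self_div]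
  rw [volume_pi, integral_fintype_prod_eq_pow (fun x => exp (-γ⁻¹ * x ^ 2)), integral_gaussian,
    div_inv_eq_mul]

variable [DecidableEq ι] {M : Matrix ι ι ℝ}

open scoped MatrixOrder in
theorem Matrix.PosDef.exists_quadForm_eq_dotProduct_self (hM : M.PosDef) :
    ∃ B : Matrix ι ι ℝ, B.det ≠ 0 ∧ |B.det| = √M.det ∧ ∀ v, v ⬝ᵥ M *ᵥ v = B *ᵥ v ⬝ᵥ B *ᵥ v := by
  obtain ⟨B, hB⟩ := CStarAlgebra.nonneg_iff_eq_star_mul_self.mp hM.posSemidef.nonneg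
  rw [star_eq_conjTranspose, conjTranspose_eq_transpose_of_trivial] at hB
  subst hB
  have hdet : (Bᵀ * B).det = B.det ^ 2 := by rw [det_mul, det_transpose, sq]
  refine ⟨B, fun h => hM.det_pos.ne' ?_, by rw [hdet, sqrt_sq_eq_abs], fun v => ?_⟩
  · rw [hdet, h, sq, mul_zero]
  · simpa using quadForm_transpose_mul_mul B 1 v

theorem Matrix.PosDef.integrable_exp_neg_quadForm_div (hM : M.PosDef) {γ : ℝ} (hγ : 0 < γ) :
    Integrable (fun v : ι → ℝ => exp (-(v ⬝ᵥ M *ᵥ v) / γ)) := by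
  obtain ⟨B, hB, -, hMB⟩ := hM.exists_quadForm_eq_dotProduct_self
  simp only [hMB]
  exact (integrable_comp_mulVec_iff hB).2 (integrable_exp_neg_dotProduct_self_div hγ)

theorem Matrix.PosDef.integral_exp_neg_quadForm_div (hM : M.PosDef) (γ : ℝ) :
    ∫ v : ι → ℝ, exp (-(v ⬝ᵥ M *ᵥ v) / γ) = √(π * γ) ^ Fintype.card ι / √M.det := by
  obtain ⟨B, hB, hBM, hMB⟩ := hM.exists_quadForm_eq_dotProduct_self
  simp only [hMB]
  rw [integral_comp_mulVec hB (fun w => exp (-(w ⬝ᵥ w) / γ)),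
    integral_exp_neg_dotProduct_self_div, hBM, smul_eq_mul, inv_mul_eq_div]

end Gaussian

section GaussianPartition

open Real

variable {ι : Type*} [Fintype ι] [DecidableEq ι] {M : Matrix ι ι ℝ}

theorem quadForm_complete_square (hM : M.IsSymm) (hdet : IsUnit M.det) (b u : ι → ℝ) :
    -(u ⬝ᵥ M *ᵥ u) + 2 * (u ⬝ᵥ b)
      = -((u - M⁻¹ *ᵥ b) ⬝ᵥ M *ᵥ (u - M⁻¹ *ᵥ b)) + b ⬝ᵥ M⁻¹ *ᵥ b := by
  have hμ : M *ᵥ (M⁻¹ *ᵥ b) = b := by rw [mulVec_mulVec, mul_nonsing_inv M hdet, one_mulVec]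
  rw [sub_eq_add_neg, quadForm_add, hM.eq, ← two_smul ℝ M, smul_mulVec, mulVec_neg, hμ,
    neg_dotProduct, dotProduct_smul, dotProduct_mulVec_comm M (M⁻¹ *ᵥ b) u, hM.eq, hμ, smul_eq_mul,
    dotProduct_neg, neg_dotProduct, dotProduct_comm b]
  ring

theorem Matrix.PosDef.exp_quadratic_div_eq (hM : M.PosDef) (γ : ℝ) (b : ι → ℝ) (C : ℝ)
    (u : ι → ℝ) :
    exp ((-(u ⬝ᵥ M *ᵥ u) + 2 * (u ⬝ᵥ b) + C) / γ)
      = exp ((b ⬝ᵥ M⁻¹ *ᵥ b + C) / γ)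
        * exp (-((u - M⁻¹ *ᵥ b) ⬝ᵥ M *ᵥ (u - M⁻¹ *ᵥ b)) / γ) := by
  rw [quadForm_complete_square (isHermitian_iff_isSymm.1 hM.isHermitian)
    hM.det_pos.ne'.isUnit, ← exp_add]
  congr 1
  ring

theorem Matrix.PosDef.integrable_exp_quadratic (hM : M.PosDef) {γ : ℝ} (hγ : 0 < γ)
    (b : ι → ℝ) (C : ℝ) :
    Integrable (fun u : ι → ℝ => exp ((-(u ⬝ᵥ M *ᵥ u) + 2 * (u ⬝ᵥ b) + C) / γ)) := by
  simp only [hM.exp_quadratic_div_eq]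
  exact ((hM.integrable_exp_neg_quadForm_div hγ).comp_sub_right _).const_mul _

theorem Matrix.PosDef.integral_exp_quadratic (hM : M.PosDef) (γ : ℝ) (b : ι → ℝ) (C : ℝ) :
    ∫ u : ι → ℝ, exp ((-(u ⬝ᵥ M *ᵥ u) + 2 * (u ⬝ᵥ b) + C) / γ)
      = exp ((b ⬝ᵥ M⁻¹ *ᵥ b + C) / γ) * (√(π * γ) ^ Fintype.card ι / √M.det) := by
  simp only [hM.exp_quadratic_div_eq]
  rw [integral_const_mul, integral_sub_right_eq_self (fun v => exp (-(v ⬝ᵥ M *ᵥ v) / γ)),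
    hM.integral_exp_neg_quadForm_div]

theorem Matrix.PosDef.mul_log_integral_exp_quadratic (hM : M.PosDef) {γ : ℝ} (hγ : 0 < γ)
    (b : ι → ℝ) (C : ℝ) :
    γ * log (∫ u : ι → ℝ, exp ((-(u ⬝ᵥ M *ᵥ u) + 2 * (u ⬝ᵥ b) + C) / γ))
      = b ⬝ᵥ M⁻¹ *ᵥ b + C
        + γ / 2 * (Fintype.card ι * log (π * γ) - log M.det) := by
  have hπγ : 0 < π * γ := by positivity
  rw [hM.integral_exp_quadratic, log_mul (exp_ne_zero _) (by positivity [hM.det_pos]), log_exp,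
    log_div (by positivity) (sqrt_ne_zero'.2 hM.det_pos), log_pow, log_sqrt hπγ.le,
    log_sqrt hM.det_pos.le]
  field_simp

end GaussianPartition

theorem lq_entropy_hjb_verification_general
    (d m : ℕ)
    (B : ℝ → Matrix (Fin d) (Fin m) ℝ) (S : ℝ → Matrix (Fin d) (Fin d) ℝ)
    (α lam : Fin d → ℝ → ℝ)
    (R : ℝ → Matrix (Fin m) (Fin m) ℝ) (Q : ℝ → Matrix (Fin d) (Fin d) ℝ)
    (β γ : ℝ) (hγ : 0 < γ)
    (hRpos : ∀ t, 0 ≤ t → (R t).PosDef)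
    (H : ℝ → Matrix (Fin d) (Fin d) ℝ) (g : ℝ → ℝ)
    (hHsymm : ∀ t, 0 ≤ t → (H t).IsSymm)
    (hH : ∀ t, 0 ≤ t → ∀ i j, HasDerivAt (fun s => H s i j)
        ((β • H t + Q t - H t * B t * (R t)⁻¹ * (B t)ᵀ * H t) i j) t)
    (hg : ∀ t, 0 ≤ t → HasDerivAt g
        (β * g t - Matrix.trace (S t * (S t)ᵀ * H t)
          - ∑ i, lam i t * (α i t) ^ 2 * H t i i
          - (γ / 2) * (m * Real.log (Real.pi * γ) - Real.log (R t).det)) t)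
    (V : ℝ → (Fin d → ℝ) → ℝ)
    (hV : V = fun t x => x ⬝ᵥ (H t).mulVec x + g t) :
    ∀ t, 0 ≤ t → ∀ x : Fin d → ℝ,
      Integrable (fun u : Fin m → ℝ =>
          Real.exp ((lqGen (B t) (S t) (fun i => α i t) (fun i => lam i t) u (V t) x
              - (u ⬝ᵥ (R t).mulVec u + x ⬝ᵥ (Q t).mulVec x)) / γ)) volume ∧
      0 = deriv (fun s => V s x) t
          + γ * Real.log (∫ u : Fin m → ℝ,
              Real.exp ((lqGen (B t) (S t) (fun i => α i t) (fun i => lam i t) u (V t) x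
                  - (u ⬝ᵥ (R t).mulVec u + x ⬝ᵥ (Q t).mulVec x)) / γ))
          - β * V t x := by
  intro t ht x
  subst hV
  set b := (B t)ᵀ *ᵥ H t *ᵥ x
  set C := trace (S t * (S t)ᵀ * H t) + ∑ i, lam i t * α i t ^ 2 * H t i i - x ⬝ᵥ Q t *ᵥ x
  have hexponent : ∀ u, lqGen (B t) (S t) (fun i => α i t) (fun i => lam i t) u
      (fun y => y ⬝ᵥ H t *ᵥ y + g t) x - (u ⬝ᵥ R t *ᵥ u + x ⬝ᵥ Q t *ᵥ x)
        = -(u ⬝ᵥ R t *ᵥ u) + 2 * (u ⬝ᵥ b) + C := fun u => by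
    rw [lqGen_quadForm _ _ _ _ (hHsymm t ht)]
    ring
  have hriccati : x ⬝ᵥ (H t * B t * (R t)⁻¹ * (B t)ᵀ * H t) *ᵥ x = b ⬝ᵥ (R t)⁻¹ *ᵥ b := by
    have h := quadForm_transpose_mul_mul ((B t)ᵀ * H t) (R t)⁻¹ x
    rw [transpose_mul, (hHsymm t ht).eq, transpose_transpose, ← mulVec_mulVec x (B t)ᵀ (H t)] at h
    simpa only [Matrix.mul_assoc] using h
  have hderiv := (hasDerivAt_quadForm (hH t ht) x).fun_add (hg t ht)
  simp only [hexponent]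
  refine ⟨(hRpos t ht).integrable_exp_quadratic hγ b C, ?_⟩
  rw [hderiv.deriv, (hRpos t ht).mul_log_integral_exp_quadratic hγ, sub_mulVec, add_mulVec,
    dotProduct_sub, dotProduct_add, smul_mulVec, dotProduct_smul, smul_eq_mul, hriccati,
    Fintype.card_fin]
  ring

/-- Verification of the quadratic ansatz for the entropy-regularized infinite-horizon
HJB equation of the time-inhomogeneous LQ jump-diffusion problem, in log-partition
(Gibbs) form: if `H` solves the Riccati ODE and `g` the scalar ODE with the entropy
correction `c_γ(t) = (γ/2)(m log(πγ) − log det R(t))`, then `V(t,x) = xᵀH(t)x + g(t)`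
satisfies `0 = ∂ₜV + γ log ∫ exp((𝓛^u V + f)/γ) du − βV`. -/
theorem lq_entropy_hjb_verification
    (d m : ℕ)
    (B : ℝ → Matrix (Fin d) (Fin m) ℝ) (S : ℝ → Matrix (Fin d) (Fin d) ℝ)
    (α lam : Fin d → ℝ → ℝ)
    (R : ℝ → Matrix (Fin m) (Fin m) ℝ) (Q : ℝ → Matrix (Fin d) (Fin d) ℝ)
    (β γ : ℝ) (hβ : 0 < β) (hγ : 0 < γ)
    (hBc : ContinuousOn B (Set.Ici 0)) (hSc : ContinuousOn S (Set.Ici 0))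
    (hαc : ∀ i, ContinuousOn (α i) (Set.Ici 0))
    (hlamc : ∀ i, ContinuousOn (lam i) (Set.Ici 0))
    (hRc : ContinuousOn R (Set.Ici 0)) (hQc : ContinuousOn Q (Set.Ici 0))
    (hlam : ∀ i t, 0 ≤ t → 0 ≤ lam i t)
    (hRpos : ∀ t, 0 ≤ t → (R t).PosDef)
    (hQsymm : ∀ t, 0 ≤ t → (Q t).IsSymm)
    (H : ℝ → Matrix (Fin d) (Fin d) ℝ) (g : ℝ → ℝ)
    (hHsymm : ∀ t, 0 ≤ t → (H t).IsSymm)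
    (hH : ∀ t, 0 ≤ t → ∀ i j, HasDerivAt (fun s => H s i j)
        ((β • H t + Q t - H t * B t * (R t)⁻¹ * (B t)ᵀ * H t) i j) t)
    (hg : ∀ t, 0 ≤ t → HasDerivAt g
        (β * g t - Matrix.trace (S t * (S t)ᵀ * H t)
          - ∑ i, lam i t * (α i t) ^ 2 * H t i i
          - (γ / 2) * (m * Real.log (Real.pi * γ) - Real.log (R t).det)) t)
    (V : ℝ → (Fin d → ℝ) → ℝ)
    (hV : V = fun t x => x ⬝ᵥ (H t).mulVec x + g t) :
    ∀ t, 0 ≤ t → ∀ x : Fin d → ℝ,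
      Integrable (fun u : Fin m → ℝ =>
          Real.exp ((lqGen (B t) (S t) (fun i => α i t) (fun i => lam i t) u (V t) x
              - (u ⬝ᵥ (R t).mulVec u + x ⬝ᵥ (Q t).mulVec x)) / γ)) volume ∧
      0 = deriv (fun s => V s x) t
          + γ * Real.log (∫ u : Fin m → ℝ,
              Real.exp ((lqGen (B t) (S t) (fun i => α i t) (fun i => lam i t) u (V t) x
                  - (u ⬝ᵥ (R t).mulVec u + x ⬝ᵥ (Q t).mulVec x)) / γ))
          - β * V t x :=
  lq_entropy_hjb_verification_general d m B S α lam R Q β γ hγ hRpos H g hHsymm hH hg V hV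
end

section
/- Let 0 < p < 1, σ > 0, λ ≥ 0, α ∈ ℝ, μ, r ∈ ℝ, and β > 0. On D := {u ∈ ℝ : 1 + αu > 0}, define G(u) := p(r + (μ − r)u) + (1/2)p(p − 1)σ²u² + λ((1 + αu)^p − 1 − pαu). Suppose u* ∈ D satisfies G'(u*) = 0 and β > G(u*), and set h* := 1/(β − G(u*)) and V(x) := (h*/p) x^p for x > 0. Then for every x > 0, β V(x) = sup_{u ∈ D} { (r + (μ − r)u) x V'(x) + (1/2)σ²u²x² V''(x) + λ( V(x(1 + αu)) − V(x) − αux V'(x) ) + x^p/p }, and the supremum is attained uniquely at u = u*. -/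
/-!
With `V(x) = (h/p) x^p` every term of the Hamiltonian is a multiple of `x^p`: the Hamiltonian at
control `u` equals `(x^p/p) (h G(u) + 1)`. Hence `h (β - G(u*)) = 1` is exactly the HJB equation at
`u*`, and maximising the Hamiltonian over `u` amounts to maximising `G`. On `D` the exponent `G` is
strictly concave (a strictly concave quadratic plus `λ` times the concave `(1 + αu)^p`), so its
critical point `u*` is its unique maximiser.
-/

open Real Set

theorem StrictConcaveOn.lt_of_deriv_eq_zero {S : Set ℝ} {f : ℝ → ℝ} {x y : ℝ}
    (hf : StrictConcaveOn ℝ S f) (hx : x ∈ S) (hy : y ∈ S) (hyx : y ≠ x)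
    (hfx : DifferentiableAt ℝ f x) (hcrit : deriv f x = 0) : f y < f x := by
  rcases hyx.lt_or_gt with hlt | hlt
  · have := hf.deriv_lt_slope hy hx hlt hfx
    rw [hcrit, slope_def_field, div_pos_iff_of_pos_right (sub_pos.mpr hlt)] at this
    linarith
  · have := hf.slope_lt_deriv hx hy hlt hfx
    rw [hcrit, slope_def_field, div_neg_iff] at this
    rcases this with ⟨h, _⟩ | ⟨_, h⟩ <;> linarith

theorem strictConcaveOn_quadratic {a b c : ℝ} (hc : c < 0) :
    StrictConcaveOn ℝ univ fun u : ℝ => c * u ^ 2 + b * u + a := by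
  refine ⟨convex_univ, fun x _ y _ hxy s t hs ht hst => ?_⟩
  obtain rfl : t = 1 - s := by linarith
  simp only [smul_eq_mul]
  have hgap := sq_pos_of_ne_zero (sub_ne_zero.mpr hxy)
  nlinarith [mul_pos (mul_pos hs ht) (mul_pos (neg_pos.mpr hc) hgap)]

theorem concaveOn_one_add_mul_rpow {p : ℝ} (hp₀ : 0 ≤ p) (hp₁ : p ≤ 1) (α : ℝ) :
    ConcaveOn ℝ {u : ℝ | 0 < 1 + α * u} fun u => (1 + α * u) ^ p := by
  have hline : ∀ u : ℝ, AffineMap.lineMap (1 : ℝ) (1 + α) u = 1 + α * u := fun u => by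
    rw [AffineMap.lineMap_apply_ring]; ring
  simpa only [preimage, Function.comp_def, hline, mem_Ioi] using
    ((Real.concaveOn_rpow hp₀ hp₁).subset Ioi_subset_Ici_self (convex_Ioi 0)).comp_affineMap
      (AffineMap.lineMap (1 : ℝ) (1 + α))

noncomputable def mertonExponent (p σ lam α μ r : ℝ) (u : ℝ) : ℝ :=
  p * (r + (μ - r) * u) + (1 / 2) * p * (p - 1) * σ ^ 2 * u ^ 2
    + lam * ((1 + α * u) ^ p - 1 - p * α * u)

theorem strictConcaveOn_mertonExponent {p σ lam : ℝ} (hp : 0 < p) (hp1 : p < 1) (hσ : σ ≠ 0)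
    (hlam : 0 ≤ lam) (α μ r : ℝ) :
    StrictConcaveOn ℝ {u | 0 < 1 + α * u} (mertonExponent p σ lam α μ r) := by
  have hc : (1 / 2) * p * (p - 1) * σ ^ 2 < 0 := by
    have := mul_pos (mul_pos hp (sub_pos.mpr hp1)) (sq_pos_of_ne_zero hσ)
    nlinarith
  have hφ := (concaveOn_one_add_mul_rpow hp.le hp1.le α).smul hlam
  have hq := strictConcaveOn_quadratic (b := p * (μ - r) - lam * p * α) (a := p * r - lam) hc
  refine ((hq.subset (subset_univ _) hφ.1).add_concaveOn hφ).congr fun u _ => ?_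
  simp only [mertonExponent, Pi.add_apply, smul_eq_mul]
  ring

theorem differentiableAt_mertonExponent {p σ lam α μ r u : ℝ} (hu : 0 < 1 + α * u) :
    DifferentiableAt ℝ (mertonExponent p σ lam α μ r) u := by
  unfold mertonExponent
  fun_prop (disch := exact Or.inl hu.ne')

noncomputable def mertonHamiltonian (p σ lam α μ r : ℝ) (V : ℝ → ℝ) (x u : ℝ) : ℝ :=
  (r + (μ - r) * u) * x * deriv V x
    + (1 / 2) * σ ^ 2 * u ^ 2 * x ^ 2 * deriv (deriv V) x
    + lam * (V (x * (1 + α * u)) - V x - α * u * x * deriv V x)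
    + x ^ p / p

theorem mertonHamiltonian_const_mul_rpow {p σ lam α μ r h x u : ℝ} (hp : p ≠ 0) (hx : 0 < x)
    (hu : 0 < 1 + α * u) :
    mertonHamiltonian p σ lam α μ r (fun y => h / p * y ^ p) x u
      = x ^ p / p * (h * mertonExponent p σ lam α μ r u + 1) := by
  have hx1 : x ^ (p - 1) = x ^ p / x := by rw [rpow_sub hx, rpow_one]
  have hx2 : x ^ (p - 1 - 1) = x ^ p / x ^ 2 := by
    rw [sub_sub, rpow_sub hx, one_add_one_eq_two, rpow_two]
  simp only [mertonHamiltonian, mertonExponent, deriv_const_mul_field', deriv_rpow_const',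
    hx1, hx2, mul_rpow hx.le hu.le]
  field_simp

theorem merton_hjb_verification_general
    (p σ lam α μ r β : ℝ)
    (hp : 0 < p) (hp1 : p < 1) (hσ : 0 < σ) (hlam : 0 ≤ lam)
    (D : Set ℝ) (hD : D = {u : ℝ | 0 < 1 + α * u})
    (G : ℝ → ℝ)
    (hG : G = fun u => p * (r + (μ - r) * u) + (1 / 2) * p * (p - 1) * σ ^ 2 * u ^ 2
        + lam * ((1 + α * u) ^ p - 1 - p * α * u))
    (ustar : ℝ) (hustar : ustar ∈ D) (hcrit : deriv G ustar = 0)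
    (hβG : G ustar < β)
    (hstar : ℝ) (hhstar : hstar = 1 / (β - G ustar))
    (V : ℝ → ℝ) (hV : V = fun x => (hstar / p) * x ^ p) :
    ∀ x : ℝ, 0 < x →
      let ham : ℝ → ℝ := fun u =>
        (r + (μ - r) * u) * x * deriv V x
          + (1 / 2) * σ ^ 2 * u ^ 2 * x ^ 2 * deriv (deriv V) x
          + lam * (V (x * (1 + α * u)) - V x - α * u * x * deriv V x)
          + x ^ p / p
      (β * V x = ham ustar) ∧
      (∀ u ∈ D, u ≠ ustar → ham u < ham ustar) := by
  intro x hx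
  change G = mertonExponent p σ lam α μ r at hG
  subst hD hG hV
  have hham : ∀ u ∈ {u : ℝ | 0 < 1 + α * u}, mertonHamiltonian p σ lam α μ r _ x u
      = x ^ p / p * (hstar * mertonExponent p σ lam α μ r u + 1) :=
    fun u hu => mertonHamiltonian_const_mul_rpow hp.ne' hx hu
  have hh : 0 < hstar := by rw [hhstar]; exact one_div_pos.mpr (sub_pos.mpr hβG)
  have hxp : 0 < x ^ p / p := div_pos (rpow_pos_of_pos hx p) hp
  refine ⟨?_, fun u hu hne => ?_⟩
  · change _ = mertonHamiltonian p σ lam α μ r _ x ustar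
    rw [hham ustar hustar, hhstar]
    field_simp [(sub_pos.mpr hβG).ne']
    ring
  · change mertonHamiltonian p σ lam α μ r _ x u < mertonHamiltonian p σ lam α μ r _ x ustar
    rw [hham u hu, hham ustar hustar]
    have hmax := (strictConcaveOn_mertonExponent hp hp1 hσ.ne' hlam α μ r).lt_of_deriv_eq_zero
      hustar hu hne (differentiableAt_mertonExponent hustar) hcrit
    gcongr

/-- Verification of the closed-form solution of the standard (γ = 0) infinite-horizon
discounted Merton problem in a jump-diffusion market: with `G` the Merton exponent
function, `u* ∈ D` a critical point of `G`, `β > G(u*)`, `h* = 1/(β − G(u*))` and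
`V(x) = (h*/p)x^p`, the stationary HJB equation
`βV(x) = sup_{u ∈ D} {(r+(μ−r)u)xV' + ½σ²u²x²V'' + λ(V(x(1+αu)) − V(x) − αuxV') + x^p/p}`
holds for every `x > 0`, the supremum being attained uniquely at `u*`. -/
theorem merton_hjb_verification
    (p σ lam α μ r β : ℝ)
    (hp : 0 < p) (hp1 : p < 1) (hσ : 0 < σ) (hlam : 0 ≤ lam) (hβ : 0 < β)
    (D : Set ℝ) (hD : D = {u : ℝ | 0 < 1 + α * u})
    (G : ℝ → ℝ)
    (hG : G = fun u => p * (r + (μ - r) * u) + (1 / 2) * p * (p - 1) * σ ^ 2 * u ^ 2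
        + lam * ((1 + α * u) ^ p - 1 - p * α * u))
    (ustar : ℝ) (hustar : ustar ∈ D) (hcrit : deriv G ustar = 0)
    (hβG : G ustar < β)
    (hstar : ℝ) (hhstar : hstar = 1 / (β - G ustar))
    (V : ℝ → ℝ) (hV : V = fun x => (hstar / p) * x ^ p) :
    ∀ x : ℝ, 0 < x →
      let ham : ℝ → ℝ := fun u =>
        (r + (μ - r) * u) * x * deriv V x
          + (1 / 2) * σ ^ 2 * u ^ 2 * x ^ 2 * deriv (deriv V) x
          + lam * (V (x * (1 + α * u)) - V x - α * u * x * deriv V x)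
          + x ^ p / p
      (β * V x = ham ustar) ∧
      (∀ u ∈ D, u ≠ ustar → ham u < ham ustar) :=
  merton_hjb_verification_general p σ lam α μ r β hp hp1 hσ hlam D hD G hG ustar hustar hcrit hβG
    hstar hhstar V hV
end
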